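/- The piecewise function d(r) equal to mk(1−(m−1)/(2k)) − [mk(1−(m−1)/(2k)) − (m−1)/S]·r for r ∈ [0,1) and equal to (m−r)/S for r ∈ [1,m], where S = ∑_{l=1}^{m} 1/(k−l+1), is continuous at r = 1 and is bounded above by the piecewise linear function d^∞(r) joining the points (l, (m−l)(k−l)) for l = 0,…,m, for all r ∈ [0,m], when k ≥ m ≥ 1. -/

import Mathlib

/-!
Since `1 / (k - m + 1)` is the last term of `S`, we have `x / S ≤ (k - m + 1) x` for `x ≥ 0`.
On `[1, m]` this bounds `d` by the line `(k - m + 1)(m - r)`, which lies below the nodes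
`(l, (m - l)(k - l))` of `d^∞` for `l ≤ m`; on `[0, 1]` both `d` and `d^∞` interpolate linearly
between their values at `0` and `1`, and `d` is below `d^∞` at both. A line below two nodes stays
below the chord joining them.
-/

open Finset AffineMap

theorem continuous_if_lt_of_eq {α γ : Type*} [TopologicalSpace α] [LinearOrder α]
    [OrderClosedTopology α] [TopologicalSpace γ] {f g : α → γ} {c : α}
    (hf : Continuous f) (hg : Continuous g) (hfg : f c = g c) :
    Continuous fun x => if x < c then f x else g x := by
  have h := hg.if_le hf continuous_const continuous_id (f := fun _ => c)
    fun x (hx : c = x) => hx ▸ hfg.symm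
  convert h using 2 with x
  by_cases hx : x < c
  · simp [hx, not_le.2 hx]
  · simp [hx, not_lt.1 hx]

theorem add_mul_sub_le_add_mul_sub {a b a' b' t : ℝ} (ha : a ≤ a') (hb : b ≤ b') (ht₀ : 0 ≤ t)
    (ht₁ : t ≤ 1) : a + t * (b - a) ≤ a' + t * (b' - a') := by
  have h := lineMap_mono_endpoints ha hb ht₀ ht₁
  rwa [lineMap_apply_ring', lineMap_apply_ring', add_comm _ a, add_comm _ a'] at h

section HarmonicTail

variable {m k : ℕ}

theorem one_div_le_sum_one_div_sub (hm : 1 ≤ m) (hk : m ≤ k) :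
    1 / ((k : ℝ) - m + 1) ≤ ∑ l ∈ range m, 1 / ((k : ℝ) - l) := by
  have hterm : ∀ l ∈ range m, 0 ≤ 1 / ((k : ℝ) - l) := fun l hl => by
    have : (l : ℝ) < k := by exact_mod_cast (mem_range.1 hl).trans_le hk
    exact one_div_nonneg.2 (by linarith)
  have hlast := single_le_sum hterm (mem_range.2 (Nat.sub_one_lt_of_lt hm))
  rwa [Nat.cast_sub hm, Nat.cast_one, sub_sub_eq_add_sub, add_sub_right_comm] at hlast

theorem div_sum_one_div_sub_le (hm : 1 ≤ m) (hk : m ≤ k) {x : ℝ} (hx : 0 ≤ x) :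
    x / ∑ l ∈ range m, 1 / ((k : ℝ) - l) ≤ ((k : ℝ) - m + 1) * x := by
  have hpos : (0 : ℝ) < k - m + 1 := by
    have : (m : ℝ) ≤ k := by exact_mod_cast hk
    linarith
  have hS := one_div_le_sum_one_div_sub hm hk
  rw [div_le_iff₀ ((one_div_pos.2 hpos).trans_le hS)]
  calc x = ((k : ℝ) - m + 1) * x * (1 / ((k : ℝ) - m + 1)) := by field_simp
    _ ≤ _ := mul_le_mul_of_nonneg_left hS (by positivity)

end HarmonicTail

theorem cast_min_floor_le {r : ℝ} (hr : 0 ≤ r) (n : ℕ) : ((min ⌊r⌋₊ n : ℕ) : ℝ) ≤ r :=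
  (Nat.cast_le.2 (min_le_left _ _)).trans (Nat.floor_le hr)

theorem le_cast_min_floor_add_one {r : ℝ} {n : ℕ} (hr : r ≤ n + 1) :
    r ≤ ((min ⌊r⌋₊ n : ℕ) : ℝ) + 1 := by
  rcases le_total ⌊r⌋₊ n with h | h
  · rw [min_eq_left h]
    exact (Nat.lt_floor_add_one r).le
  · rwa [min_eq_right h]

theorem sub_mul_sub_le_chord {m k l : ℕ} (hl : l + 1 ≤ m) (hk : m ≤ k) {r : ℝ}
    (hlr : (l : ℝ) ≤ r) (hrl : r ≤ l + 1) :
    ((k : ℝ) - m + 1) * (m - r) ≤ ((m : ℝ) - l) * ((k : ℝ) - l) +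
      (r - l) * (((m : ℝ) - l - 1) * ((k : ℝ) - l - 1) - ((m : ℝ) - l) * ((k : ℝ) - l)) := by
  have hl' : (l : ℝ) + 1 ≤ m := by exact_mod_cast hl
  have hk' : (m : ℝ) ≤ k := by exact_mod_cast hk
  have hnode : 0 ≤ ((m : ℝ) - l - 1) * ((m : ℝ) - l - 2) := by
    rcases Nat.eq_or_lt_of_le hl with h | h
    · have : (m : ℝ) - l - 1 = 0 := by rw [← h]; push_cast; ring
      rw [this, zero_mul]
    · have : (l : ℝ) + 2 ≤ m := by exact_mod_cast h
      nlinarith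
  calc ((k : ℝ) - m + 1) * (m - r)
      = ((k : ℝ) - m + 1) * (m - l) + (r - l) *
          (((k : ℝ) - m + 1) * (m - l - 1) - ((k : ℝ) - m + 1) * (m - l)) := by ring
    _ ≤ _ := add_mul_sub_le_add_mul_sub (by nlinarith) (by nlinarith) (by linarith) (by linarith)

theorem stmt_17 (m k : ℕ) (hm : 1 ≤ m) (hk : m ≤ k) :
    let S : ℝ := ∑ l ∈ Finset.range m, 1 / ((k : ℝ) - l)
    let d : ℝ → ℝ := fun r =>
      if r < 1 then
        (m : ℝ) * k * (1 - ((m : ℝ) - 1) / (2 * k)) -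
          ((m : ℝ) * k * (1 - ((m : ℝ) - 1) / (2 * k)) - ((m : ℝ) - 1) / S) * r
      else ((m : ℝ) - r) / S
    let dInf : ℝ → ℝ := fun r =>
      let l : ℕ := min (Nat.floor r) (m - 1)
      ((m : ℝ) - l) * ((k : ℝ) - l) +
        (r - l) * ((((m : ℝ) - l - 1) * ((k : ℝ) - l - 1)) - ((m : ℝ) - l) * ((k : ℝ) - l))
    ContinuousAt d 1 ∧ ∀ r ∈ Set.Icc (0 : ℝ) (m : ℝ), d r ≤ dInf r := by
  intro S d dInf
  have hm' : (1 : ℝ) ≤ m := by exact_mod_cast hm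
  refine ⟨(continuous_if_lt_of_eq (by fun_prop) (by fun_prop) (by ring)).continuousAt, ?_⟩
  rintro r ⟨hr0, hrm⟩
  by_cases hr1 : r < 1
  · have hl : min ⌊r⌋₊ (m - 1) = 0 := by rw [Nat.floor_eq_zero.2 hr1, Nat.zero_min]
    simp only [d, dInf, if_pos hr1, hl, Nat.cast_zero, sub_zero]
    have hA : (m : ℝ) * k * (1 - ((m : ℝ) - 1) / (2 * k)) ≤ m * k := by
      have : 0 ≤ ((m : ℝ) - 1) / (2 * k) := div_nonneg (by linarith) (by positivity)
      nlinarith [mul_nonneg (by positivity : (0 : ℝ) ≤ m * k) this]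
    have hB : ((m : ℝ) - 1) / S ≤ (m - 1) * (k - 1) := by
      have hchord := sub_mul_sub_le_chord (l := 0) hm hk (r := 1) (by simp) (by simp)
      refine (div_sum_one_div_sub_le hm hk (by linarith)).trans ?_
      simp only [Nat.cast_zero, sub_zero, one_mul] at hchord
      linarith
    calc _ = (m : ℝ) * k * (1 - ((m : ℝ) - 1) / (2 * k)) +
            r * (((m : ℝ) - 1) / S - (m : ℝ) * k * (1 - ((m : ℝ) - 1) / (2 * k))) := by ring
      _ ≤ _ := add_mul_sub_le_add_mul_sub hA hB hr0 hr1.le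
  · simp only [d, dInf, if_neg hr1]
    have hmr : r ≤ ((m - 1 : ℕ) : ℝ) + 1 := by rwa [Nat.cast_sub hm, Nat.cast_one, sub_add_cancel]
    exact (div_sum_one_div_sub_le hm hk (by linarith)).trans <| by
      exact sub_mul_sub_le_chord (by omega) hk (cast_min_floor_le hr0 _)
        (le_cast_min_floor_add_one hmr)
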